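/- arXiv:1602.06598 — 3 statements merged into one kernel-verified Lean document; each statement's English description precedes it below -/
import Mathlib

section
/- Let X be a nonnegative random variable on a probability space (Ω, 𝒜, P), and let 0 ≤ T_th ≤ T_max < ∞ be real numbers. Then E[log₂(1 + min(X, T_max)) · 1_{X ≥ T_th}] = log₂(1 + T_th) · P(X ≥ T_th) + (1/ln 2) · ∫_{T_th}^{T_max} P(X > y)/(1 + y) dy. -/
/-! For `x ≥ a` write `φ (min x b) = φ a + ∫ y in a..b, 1_{y < x} φ' y`, put `x = X ω`, integrate
over `ω` and exchange the two integrals: the inner `ω`-integral of `1_{y < X ω}` is `P(X > y)`.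
For `φ = log₂ (1 + ·)`, `φ' y = 1 / ((1 + y) ln 2)`. -/

open MeasureTheory Real Set

theorem setIntegral_Ioc_indicator_Iio (f : ℝ → ℝ) (a b x : ℝ) :
    ∫ y in Ioc a b, (Iio x).indicator f y = ∫ y in Ioc a (min b x), f y := by
  rw [integral_congr_ae (ae_restrict_of_ae (indicator_ae_eq_of_ae_eq_set Iio_ae_eq_Iic)),
    setIntegral_indicator measurableSet_Iic, Ioc_inter_Iic]

section LayerCake

variable {Ω : Type*} [MeasurableSpace Ω] (P : Measure Ω) [IsFiniteMeasure P] {X : Ω → ℝ}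
  {f : ℝ → ℝ} {s : Set ℝ}

theorem integrable_prod_indicator_Iio (hX : Measurable X) (hf : IntegrableOn f s) :
    Integrable (fun p : Ω × ℝ => (Iio (X p.1)).indicator f p.2) (P.prod (volume.restrict s)) := by
  have hset : MeasurableSet {p : Ω × ℝ | p.2 < X p.1} :=
    measurableSet_lt measurable_snd (hX.comp measurable_fst)
  exact (hf.comp_snd P).indicator hset

theorem integral_setIntegral_indicator_Iio (hX : Measurable X) (hf : IntegrableOn f s) :
    ∫ ω, (∫ y in s, (Iio (X ω)).indicator f y) ∂P = ∫ y in s, P.real {ω | y < X ω} * f y := by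
  rw [integral_integral_swap (integrable_prod_indicator_Iio P hX hf)]
  refine integral_congr_ae (Filter.Eventually.of_forall fun y => ?_)
  have hslice : (fun ω => (Iio (X ω)).indicator f y) = {ω | y < X ω}.indicator fun _ => f y := by
    ext ω
    simp [indicator_apply]
  dsimp only
  rw [hslice, integral_indicator_const _ (measurableSet_lt measurable_const hX), smul_eq_mul]

theorem integral_indicator_comp_min {φ φ' : ℝ → ℝ} {a b : ℝ} (hX : Measurable X) (hab : a ≤ b)
    (hφ' : IntegrableOn φ' (Ioc a b)) (hφ : ∀ t ∈ Icc a b, ∫ y in a..t, φ' y = φ t - φ a) :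
    ∫ ω, {ω | a ≤ X ω}.indicator (fun ω => φ (min (X ω) b)) ω ∂P
      = φ a * P.real {ω | a ≤ X ω} + ∫ y in a..b, P.real {ω | y < X ω} * φ' y := by
  set A := {ω | a ≤ X ω}
  have hA : MeasurableSet A := measurableSet_le measurable_const hX
  have hsplit : ∀ ω, A.indicator (fun ω => φ (min (X ω) b)) ω
      = A.indicator (fun _ => φ a) ω + ∫ y in Ioc a b, (Iio (X ω)).indicator φ' y := by
    intro ω
    rw [setIntegral_Ioc_indicator_Iio]
    by_cases hω : ω ∈ A
    · have hmin : min b (X ω) ∈ Icc a b := ⟨le_min hab hω, min_le_left _ _⟩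
      rw [indicator_of_mem hω, indicator_of_mem hω, ← intervalIntegral.integral_of_le hmin.1,
        hφ _ hmin, min_comm]
      ring
    · rw [indicator_of_notMem hω, indicator_of_notMem hω,
        Ioc_eq_empty (not_lt.2 (min_le_right _ _ |>.trans (not_le.1 hω).le)),
        Measure.restrict_empty, integral_zero_measure, add_zero]
  rw [integral_congr_ae (Filter.Eventually.of_forall hsplit),
    integral_add ((integrable_const _).indicator hA)
      (integrable_prod_indicator_Iio P hX hφ').integral_prod_left,
    integral_indicator_const _ hA, integral_setIntegral_indicator_Iio P hX hφ',
    intervalIntegral.integral_of_le hab, smul_eq_mul, mul_comm]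

end LayerCake

theorem integral_inv_one_add {a b : ℝ} (ha : -1 < a) (hb : -1 < b) :
    ∫ y in a..b, (1 + y)⁻¹ = log (1 + b) - log (1 + a) := by
  rw [intervalIntegral.integral_comp_add_left (fun y => y⁻¹),
    integral_inv_of_pos (by linarith) (by linarith), log_div (by linarith) (by linarith)]

theorem effective_rate_identity_general
    {Ω : Type*} [MeasurableSpace Ω] (P : Measure Ω) [IsProbabilityMeasure P]
    (X : Ω → ℝ) (hX : Measurable X)
    (Tth Tmax : ℝ) (hth : 0 ≤ Tth) (hmax : Tth ≤ Tmax) :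
    ∫ ω, ({ω : Ω | Tth ≤ X ω}.indicator
        (fun ω => Real.logb 2 (1 + min (X ω) Tmax)) ω) ∂P
      = Real.logb 2 (1 + Tth) * (P {ω | Tth ≤ X ω}).toReal
        + (1 / Real.log 2) * ∫ y in Tth..Tmax, (P {ω | y < X ω}).toReal / (1 + y) := by
  have hφ : ∀ t ∈ Icc Tth Tmax,
      ∫ y in Tth..t, (1 + y)⁻¹ / log 2 = logb 2 (1 + t) - logb 2 (1 + Tth) := by
    intro t ht
    rw [intervalIntegral.integral_div, integral_inv_one_add (by linarith) (by linarith [ht.1]),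
      logb, logb, sub_div]
  have hφ' : IntegrableOn (fun y => (1 + y)⁻¹ / log 2) (Ioc Tth Tmax) := by
    refine (ContinuousOn.integrableOn_Icc ?_).mono_set Ioc_subset_Icc_self
    exact ((continuousOn_const.add continuousOn_id).inv₀ fun y hy =>
      (show (0 : ℝ) < 1 + y by linarith [hy.1]).ne').div_const _
  rw [integral_indicator_comp_min (φ := fun t => logb 2 (1 + t)) P hX hmax hφ' hφ,
    ← intervalIntegral.integral_const_mul]
  simp only [measureReal_def]
  congr 2 with y
  ring

/-- **Effective rate identity with a finite MCS cap.**
For a nonnegative random variable `X` on a probability space `(Ω, 𝒜, P)` and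
thresholds `0 ≤ T_th ≤ T_max < ∞`,
`E[log₂(1 + min(X, T_max)) · 1_{X ≥ T_th}]
  = log₂(1 + T_th) · P(X ≥ T_th) + (1/ln 2) · ∫_{T_th}^{T_max} P(X > y)/(1 + y) dy`. -/
theorem effective_rate_identity
    {Ω : Type*} [MeasurableSpace Ω] (P : Measure Ω) [IsProbabilityMeasure P]
    (X : Ω → ℝ) (hX : Measurable X) (hX0 : ∀ ω, 0 ≤ X ω)
    (Tth Tmax : ℝ) (hth : 0 ≤ Tth) (hmax : Tth ≤ Tmax) :
    ∫ ω, ({ω : Ω | Tth ≤ X ω}.indicator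
        (fun ω => Real.logb 2 (1 + min (X ω) Tmax)) ω) ∂P
      = Real.logb 2 (1 + Tth) * (P {ω | Tth ≤ X ω}).toReal
        + (1 / Real.log 2) * ∫ y in Tth..Tmax, (P {ω | y < X ω}).toReal / (1 + y) :=
  effective_rate_identity_general P X hX Tth Tmax hth hmax
end

section
/- For every positive integer N and every x > 0, the cumulative distribution function F_N of the normalized Gamma distribution with parameter N satisfies (1 − e^{−a_N x})^N ≤ F_N(x), where a_N = N·(N!)^{−1/N}. -/
/-!
Write `P t = (1 - e^{-a t})^N` and `F` for the CDF. Since `F - P` vanishes at `0` and tends to `0`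
at `∞`, it is nonnegative as soon as its derivative changes sign at most once on `(0, ∞)`, from `+`
to `−`. With `c = (N - a) / (N - 1)`, the relation `a^N N! = N^N` gives
`f_N t = N a e^{-a t} (a t e^{-c t})^{N-1}`, so `(F - P)'` has the sign of
`a t e^{-c t} - (1 - e^{-a t}) = e^{-a t} ψ t`, where `ψ t = a t e^{(a-c) t} - e^{a t} + 1`.
A single sign change passes from a derivative to any function starting at `0`, and it holds for
`ψ' t = a e^{(a-c) t} (1 + (a - c) t - e^{c t})` because the last factor vanishes at `0` and has
an antitone derivative.
-/

open MeasureTheory ProbabilityTheory Set Filter Topology Real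
open scoped Nat

def SingleCrossing (f : ℝ → ℝ) : Prop :=
  ∀ ⦃s t : ℝ⦄, 0 < s → s ≤ t → f s < 0 → f t ≤ 0

namespace SingleCrossing

variable {f g w : ℝ → ℝ}

lemma of_antitoneOn (hf : AntitoneOn f (Ioi 0)) : SingleCrossing f :=
  fun _ _ hs hst hneg => (hf hs (hs.trans_le hst) hst).trans hneg.le

lemma of_eq_pos_mul (hg : SingleCrossing g) (hw : ∀ t > 0, 0 < w t)
    (hf : ∀ t > 0, f t = w t * g t) : SingleCrossing f := by
  intro s t hs hst hneg
  have ht : 0 < t := hs.trans_le hst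
  rw [hf s hs] at hneg
  rw [hf t ht]
  have hgs : g s < 0 := neg_of_mul_neg_right hneg (hw s hs).le
  exact mul_nonpos_of_nonneg_of_nonpos (hw t ht).le (hg hs hst hgs)

lemma pow_sub_pow {X Y : ℝ → ℝ} (hX : ∀ t > 0, 0 ≤ X t) (hY : ∀ t > 0, 0 ≤ Y t)
    (h : SingleCrossing fun t => X t - Y t) (n : ℕ) :
    SingleCrossing fun t => X t ^ n - Y t ^ n := by
  intro s t hs hst hneg
  have ht : 0 < t := hs.trans_le hst
  have hlt : X s < Y s := lt_of_pow_lt_pow_left₀ n (hY s hs) (sub_neg.1 hneg)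
  have hle : X t ≤ Y t := sub_nonpos.1 (h hs hst (sub_neg.2 hlt))
  exact sub_nonpos.2 (pow_le_pow_left₀ (hX t ht) hle n)

variable {g' : ℝ → ℝ}

lemma le_of_hasDerivAt (hg' : SingleCrossing g') (hcont : ContinuousWithinAt g (Ici 0) 0)
    (hderiv : ∀ t > 0, HasDerivAt g (g' t) t) (hg0 : 0 ≤ g 0) {s t : ℝ} (hs : 0 < s)
    (hst : s ≤ t) (hneg : g s < 0) : g t ≤ g s := by
  obtain ⟨r, hr, hr'⟩ : ∃ r ∈ Ioo 0 s, g' r < 0 := by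
    by_contra! hnonneg
    have hmono : MonotoneOn g (Icc 0 s) := by
      refine monotoneOn_of_hasDerivWithinAt_nonneg (f' := g') (convex_Icc 0 s) ?_ ?_ ?_
      · intro u hu
        rcases hu.1.eq_or_lt with rfl | hu0
        · exact hcont.mono Icc_subset_Ici_self
        · exact (hderiv u hu0).continuousAt.continuousWithinAt
      · rw [interior_Icc]
        exact fun u hu => (hderiv u hu.1).hasDerivWithinAt
      · rw [interior_Icc]
        exact hnonneg
    linarith [hmono ⟨le_rfl, hs.le⟩ ⟨hs.le, le_rfl⟩ hs.le]
  have hanti : AntitoneOn g (Ici s) := by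
    refine antitoneOn_of_hasDerivWithinAt_nonpos (f' := g') (convex_Ici s) ?_ ?_ ?_
    · exact fun u hu => (hderiv u (hs.trans_le hu)).continuousAt.continuousWithinAt
    · rw [interior_Ici]
      exact fun u hu => (hderiv u (hs.trans hu)).hasDerivWithinAt
    · rw [interior_Ici]
      exact fun u hu => hg' hr.1 (hr.2.trans hu).le hr'
  exact hanti self_mem_Ici hst hst

lemma of_hasDerivAt (hg' : SingleCrossing g') (hcont : ContinuousWithinAt g (Ici 0) 0)
    (hderiv : ∀ t > 0, HasDerivAt g (g' t) t) (hg0 : 0 ≤ g 0) : SingleCrossing g :=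
  fun _ _ hs hst hneg => (hg'.le_of_hasDerivAt hcont hderiv hg0 hs hst hneg).trans hneg.le

lemma nonneg_of_hasDerivAt (hg' : SingleCrossing g') (hcont : ContinuousWithinAt g (Ici 0) 0)
    (hderiv : ∀ t > 0, HasDerivAt g (g' t) t) (hg0 : 0 ≤ g 0) {L : ℝ}
    (htop : Tendsto g atTop (𝓝 L)) (hL : 0 ≤ L) {x : ℝ} (hx : 0 < x) : 0 ≤ g x := by
  by_contra! hneg
  have hev : ∀ᶠ t in atTop, g t ≤ g x := by
    filter_upwards [eventually_ge_atTop x] with t ht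
    exact hg'.le_of_hasDerivAt hcont hderiv hg0 hx ht hneg
  linarith [le_of_tendsto htop hev]

end SingleCrossing

lemma singleCrossing_one_add_mul_sub_exp (b c : ℝ) :
    SingleCrossing fun t => 1 + b * t - exp (c * t) := by
  have hmono : Monotone fun t => c * exp (c * t) := by
    intro s t hst
    rcases le_total 0 c with hc | hc
    · dsimp only
      gcongr
    · exact mul_le_mul_of_nonpos_left (exp_le_exp.2 (mul_le_mul_of_nonpos_left hst hc)) hc
  refine SingleCrossing.of_hasDerivAt (g' := fun t => b - c * exp (c * t)) ?_
    (by fun_prop) (fun t _ => ?_) (by simp)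
  · exact .of_antitoneOn fun s _ t _ hst => sub_le_sub_left (hmono hst) b
  · exact (((hasDerivAt_const_mul b).const_add 1).sub (hasDerivAt_const_mul c).exp).congr_deriv
      (by ring)

lemma singleCrossing_mul_exp_neg_sub_one_sub_exp_neg {a : ℝ} (ha : 0 < a) (c : ℝ) :
    SingleCrossing fun t => a * t * exp (-(c * t)) - (1 - exp (-(a * t))) := by
  have hψ : SingleCrossing fun t => a * t * exp ((a - c) * t) - exp (a * t) + 1 := by
    refine SingleCrossing.of_hasDerivAt (g' := fun t => a * exp ((a - c) * t) *
      (1 + (a - c) * t - exp (c * t))) ?_ (by fun_prop) (fun t _ => ?_) (by simp)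
    · exact (singleCrossing_one_add_mul_sub_exp _ _).of_eq_pos_mul
        (fun t _ => by positivity) fun t _ => rfl
    · refine ((((hasDerivAt_const_mul a).mul (hasDerivAt_const_mul (a - c)).exp).sub
        (hasDerivAt_const_mul a).exp).add_const 1).congr_deriv ?_
      rw [show a * t = (a - c) * t + c * t by ring, exp_add]
      ring
  refine hψ.of_eq_pos_mul (fun t _ => exp_pos (-(a * t))) fun t _ => ?_
  rw [show -(c * t) = -(a * t) + (a - c) * t by ring, exp_add, mul_add, mul_sub,
    ← exp_add (-(a * t)) (a * t), neg_add_cancel, exp_zero]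
  ring

lemma hasDerivAt_integral_Iic {f : ℝ → ℝ} (hf : Integrable f) {t : ℝ} (hft : ContinuousAt f t) :
    HasDerivAt (fun u => ∫ x in Iic u, f x) (f t) t := by
  have hsplit : (fun u => ∫ x in Iic u, f x) = fun u => (∫ x in Iic 0, f x) + ∫ x in 0..u, f x :=
    funext fun u => by
      rw [← intervalIntegral.integral_Iic_sub_Iic hf.integrableOn hf.integrableOn]
      ring
  rw [hsplit]
  exact (intervalIntegral.integral_hasDerivAt_right hf.intervalIntegrable
    hf.aestronglyMeasurable.stronglyMeasurableAtFilter hft).const_add _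

section Gamma

variable {a r : ℝ}

lemma integrable_gammaPDFReal (ha : 0 < a) (hr : 0 < r) : Integrable (gammaPDFReal a r) := by
  refine ⟨(measurable_gammaPDFReal a r).aestronglyMeasurable, ?_⟩
  rw [hasFiniteIntegral_iff_ofReal (ae_of_all _ (gammaPDFReal_nonneg ha hr))]
  exact (lintegral_gammaPDF_eq_one ha hr).trans_lt ENNReal.one_lt_top

lemma continuousAt_gammaPDFReal {t : ℝ} (ht : 0 < t) : ContinuousAt (gammaPDFReal a r) t := by
  have heq : (fun s => r ^ a / Gamma a * s ^ (a - 1) * exp (-(r * s))) =ᶠ[𝓝 t]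
      gammaPDFReal a r := by
    filter_upwards [Ioi_mem_nhds ht] with s hs
    rw [gammaPDFReal, if_pos hs.le]
  refine ContinuousAt.congr ?_ heq
  exact ((continuousAt_rpow_const t _ (Or.inl ht.ne')).const_mul _).mul (by fun_prop)

lemma hasDerivAt_cdf_gammaMeasure (ha : 0 < a) (hr : 0 < r) {t : ℝ} (ht : 0 < t) :
    HasDerivAt (cdf (gammaMeasure a r)) (gammaPDFReal a r t) t := by
  rw [show ⇑(cdf (gammaMeasure a r)) = fun u => ∫ x in Iic u, gammaPDFReal a r x from
    funext (cdf_gammaMeasure_eq_integral ha hr)]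
  exact hasDerivAt_integral_Iic (integrable_gammaPDFReal ha hr) (continuousAt_gammaPDFReal ht)

lemma gammaPDFReal_natCast {n : ℕ} (hn : 0 < n) (r : ℝ) {t : ℝ} (ht : 0 ≤ t) :
    gammaPDFReal n r t = r ^ n / (n - 1)! * t ^ (n - 1) * exp (-(r * t)) := by
  obtain ⟨m, rfl⟩ : ∃ m, n = m + 1 := ⟨n - 1, by omega⟩
  rw [gammaPDFReal, if_pos ht, Nat.cast_succ, add_sub_cancel_right, Gamma_nat_eq_factorial,
    ← Nat.cast_succ, rpow_natCast, rpow_natCast, Nat.add_sub_cancel]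

lemma gammaPDFReal_natCast_self_eq_mul_pow {n : ℕ} (hn : 0 < n) {a c : ℝ}
    (hpow : a ^ n * n ! = n ^ n) (hc : a + c * (n - 1) = n) {t : ℝ} (ht : 0 ≤ t) :
    gammaPDFReal n n t = n * a * exp (-(a * t)) * (a * t * exp (-(c * t))) ^ (n - 1) := by
  have hfact : (n ! : ℝ) = n * (n - 1)! := by
    rw [← Nat.mul_factorial_pred hn.ne', Nat.cast_mul]
  have hexp : exp (-(a * t)) * exp (-(c * t)) ^ (n - 1) = exp (-(n * t)) := by
    rw [← exp_nat_mul, ← exp_add, Nat.cast_pred hn]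
    congr 1
    linear_combination (-t) * hc
  have hapow : a * a ^ (n - 1) = a ^ n := by
    rw [← pow_succ', Nat.sub_add_cancel hn]
  rw [gammaPDFReal_natCast hn _ ht, mul_pow, mul_pow, ← hexp, ← hpow, hfact]
  field_simp
  rw [← hapow]
  ring

end Gamma

lemma pow_one_sub_exp_neg_le_cdf_gammaMeasure {n : ℕ} (hn : 0 < n) {a : ℝ} (ha : 0 < a)
    (hpow : a ^ n * n ! = n ^ n) {x : ℝ} (hx : 0 < x) :
    (1 - exp (-(a * x))) ^ n ≤ cdf (gammaMeasure n n) x := by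
  obtain ⟨c, hc⟩ : ∃ c : ℝ, a + c * (n - 1) = n := by
    rcases eq_or_ne n 1 with rfl | hn1
    · exact ⟨0, by simpa using hpow⟩
    · have : (n : ℝ) - 1 ≠ 0 := sub_ne_zero.2 (by exact_mod_cast hn1)
      exact ⟨(n - a) / (n - 1), by rw [div_mul_cancel₀ _ this]; ring⟩
  have hn0 : (0 : ℝ) < n := by exact_mod_cast hn
  have hP : ∀ t, HasDerivAt (fun t => (1 - exp (-(a * t))) ^ n)
      (n * (1 - exp (-(a * t))) ^ (n - 1) * (a * exp (-(a * t)))) t := fun t =>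
    (((hasDerivAt_const_mul a).neg.exp.const_sub 1).pow n).congr_deriv
      (by simp only [Pi.neg_apply]; ring)
  have hcross : SingleCrossing fun t =>
      gammaPDFReal n n t - n * (1 - exp (-(a * t))) ^ (n - 1) * (a * exp (-(a * t))) := by
    refine ((singleCrossing_mul_exp_neg_sub_one_sub_exp_neg ha c).pow_sub_pow
      (fun t ht => by positivity) (fun t ht => ?_) (n - 1)).of_eq_pos_mul
      (w := fun t => n * a * exp (-(a * t))) (fun t _ => by positivity) (fun t ht => ?_)
    · exact sub_nonneg.2 (exp_le_one_iff.2 (by nlinarith))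
    · rw [gammaPDFReal_natCast_self_eq_mul_pow hn hpow hc ht.le]
      ring
  have hlim : Tendsto (fun t => cdf (gammaMeasure n n) t - (1 - exp (-(a * t))) ^ n) atTop
      (𝓝 0) := by
    have hexp : Tendsto (fun t => exp (-(a * t))) atTop (𝓝 0) :=
      tendsto_exp_neg_atTop_nhds_zero.comp (tendsto_id.const_mul_atTop ha)
    simpa using (tendsto_cdf_atTop _).sub ((tendsto_const_nhds (x := (1 : ℝ)).sub hexp).pow n)
  exact sub_nonneg.1 <| hcross.nonneg_of_hasDerivAt
    (((cdf _).right_continuous 0).sub (hP 0).continuousAt.continuousWithinAt)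
    (fun t ht => (hasDerivAt_cdf_gammaMeasure hn0 hn0 ht).sub (hP t))
    (by simpa [zero_pow hn.ne'] using cdf_nonneg _ 0) hlim le_rfl hx

/-- **Alzer-type lower bound on the normalized incomplete gamma function.**
For every positive integer `N` and every `x > 0`, the CDF `F_N` of the
normalized Gamma distribution (shape `N`, rate `N`) satisfies
`(1 − e^{−a_N x})^N ≤ F_N(x)`, where `a_N = N·(N!)^{−1/N}`. -/
theorem normalized_gamma_cdf_lower_bound
    (N : ℕ) (hN : 0 < N) (x : ℝ) (hx : 0 < x) :
    (1 - Real.exp (-(N * ((N.factorial : ℝ) ^ (-(1 : ℝ) / N))) * x)) ^ N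
      ≤ ((gammaMeasure (N : ℝ) (N : ℝ)) (Set.Iic x)).toReal := by
  set a : ℝ := N * ((N ! : ℝ) ^ (-(1 : ℝ) / N))
  have hN0 : (0 : ℝ) < N := by exact_mod_cast hN
  have hpow : a ^ N * N ! = N ^ N := by
    rw [mul_pow, ← rpow_natCast ((N ! : ℝ) ^ _), ← rpow_mul (by positivity),
      div_mul_cancel₀ _ hN0.ne', rpow_neg_one, mul_assoc, inv_mul_cancel₀ (by positivity),
      mul_one]
  have : IsProbabilityMeasure (gammaMeasure N N) := isProbabilityMeasure_gammaMeasure hN0 hN0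
  rw [neg_mul, ← measureReal_def, ← cdf_eq_real]
  exact pow_one_sub_exp_neg_le_cdf_gammaMeasure hN (by positivity) hpow hx
end

section
/- For every positive integer N and every x > 0, the cumulative distribution function F_N of the normalized Gamma distribution with parameter N satisfies F_N(x) ≤ (1 − e^{−N x})^N. -/
/-!
Rescaling by the rate reduces the claim to the Erlang CDF `G n s = 1 - e^{-s} ∑_{k<n} s^k/k!`
(the CDF of a sum of `n` independent standard exponentials, which dominates their maximum, whose
CDF is `(1 - e^{-s})^n`). Analytically: `(e^s G (n+1) s)' = e^s G n s`, so
`e^s G (n+1) s = ∫₀ˢ e^t G n t dt ≤ (1 - e^{-s})^n ∫₀ˢ e^t dt = e^s (1 - e^{-s})^(n+1)`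
by induction and monotonicity of `1 - e^{-t}`.
-/

open MeasureTheory ProbabilityTheory Set Real Finset
open scoped Nat

theorem hasDerivAt_sum_range_pow_div_factorial (n : ℕ) (t : ℝ) :
    HasDerivAt (fun t : ℝ => ∑ k ∈ range (n + 1), t ^ k / k !) (∑ k ∈ range n, t ^ k / k !) t := by
  have hterm : ∀ k ∈ range (n + 1),
      HasDerivAt (fun t : ℝ => t ^ k / k !) (k * t ^ (k - 1) / k !) t :=
    fun k _ => (hasDerivAt_pow k t).div_const _
  refine (HasDerivAt.fun_sum hterm).congr_deriv ?_
  rw [sum_range_succ']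
  simp only [CharP.cast_eq_zero, zero_mul, zero_div, add_zero]
  refine sum_congr rfl fun k _ => ?_
  rw [Nat.factorial_succ, Nat.cast_mul, Nat.add_sub_cancel, mul_div_mul_left]
  positivity

noncomputable def erlangCDF (n : ℕ) (s : ℝ) : ℝ :=
  1 - exp (-s) * ∑ k ∈ range n, s ^ k / k !

@[fun_prop]
theorem continuous_erlangCDF (n : ℕ) : Continuous (erlangCDF n) := by
  unfold erlangCDF; fun_prop

theorem erlangCDF_zero_right (n : ℕ) (hn : n ≠ 0) : erlangCDF n 0 = 0 := by
  obtain ⟨m, rfl⟩ := Nat.exists_eq_add_one_of_ne_zero hn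
  simp [erlangCDF, sum_range_succ']

theorem hasDerivAt_erlangCDF (n : ℕ) (s : ℝ) :
    HasDerivAt (erlangCDF (n + 1)) (exp (-s) * (s ^ n / n !)) s := by
  have h := ((hasDerivAt_neg s).exp.mul (hasDerivAt_sum_range_pow_div_factorial n s)).const_sub 1
  refine HasDerivAt.congr_deriv (f := erlangCDF (n + 1)) h ?_
  rw [sum_range_succ]
  ring

theorem hasDerivAt_exp_mul_erlangCDF (n : ℕ) (s : ℝ) :
    HasDerivAt (fun t => exp t * erlangCDF (n + 1) t) (exp s * erlangCDF n s) s := by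
  have exp_mul (m : ℕ) (t : ℝ) : exp t * erlangCDF m t = exp t - ∑ k ∈ range m, t ^ k / k ! := by
    rw [erlangCDF, mul_sub, ← mul_assoc, ← exp_add, add_neg_cancel, exp_zero, mul_one, one_mul]
  simp only [exp_mul]
  exact (hasDerivAt_exp s).sub (hasDerivAt_sum_range_pow_div_factorial n s)

theorem erlangCDF_le_one_sub_exp_neg_pow (n : ℕ) {s : ℝ} (hs : 0 ≤ s) :
    erlangCDF n s ≤ (1 - exp (-s)) ^ n := by
  induction n generalizing s with
  | zero => simp [erlangCDF]
  | succ n ih =>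
    have hcont : Continuous fun t => exp t * erlangCDF n t := by fun_prop
    refine le_of_mul_le_mul_left ?_ (exp_pos s)
    calc exp s * erlangCDF (n + 1) s = ∫ t in 0..s, exp t * erlangCDF n t := by
          rw [intervalIntegral.integral_eq_sub_of_hasDerivAt
            (fun t _ => hasDerivAt_exp_mul_erlangCDF n t) (hcont.intervalIntegrable 0 s),
            erlangCDF_zero_right _ n.succ_ne_zero, mul_zero, sub_zero]
      _ ≤ ∫ t in 0..s, exp t * (1 - exp (-s)) ^ n := by
          refine intervalIntegral.integral_mono_on hs (hcont.intervalIntegrable 0 s)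
            ((by fun_prop : Continuous _).intervalIntegrable 0 s) fun t ⟨ht, hts⟩ => ?_
          have hnonneg : 0 ≤ 1 - exp (-t) := sub_nonneg.2 (exp_le_one_iff.2 (neg_nonpos.2 ht))
          gcongr
          exact (ih ht).trans (by gcongr)
      _ = exp s * (1 - exp (-s)) ^ (n + 1) := by
          rw [intervalIntegral.integral_mul_const, integral_exp, exp_zero, pow_succ, exp_neg]
          field_simp

theorem gammaMeasure_Iic_toReal_eq_intervalIntegral {a r : ℝ} (ha : 0 < a) (hr : 0 < r) {x : ℝ}
    (hx : 0 ≤ x) : (gammaMeasure a r (Iic x)).toReal = ∫ t in 0..x, gammaPDFReal a r t := by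
  rw [gammaMeasure, withDensity_apply _ measurableSet_Iic,
    lintegral_Iic_eq_lintegral_Iio_add_Icc _ hx, lintegral_gammaPDF_of_nonpos le_rfl, zero_add,
    intervalIntegral.integral_of_le hx, ← integral_Icc_eq_integral_Ioc,
    integral_eq_lintegral_of_nonneg_ae (ae_of_all _ (gammaPDFReal_nonneg ha hr)) (by fun_prop)]
  rfl

theorem gammaPDFReal_natCast_add_one (n : ℕ) (r : ℝ) {t : ℝ} (ht : 0 ≤ t) :
    gammaPDFReal (n + 1) r t = r * (exp (-(r * t)) * ((r * t) ^ n / n !)) := by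
  rw [gammaPDFReal, if_pos ht, Gamma_nat_eq_factorial, add_sub_cancel_right, rpow_natCast,
    ← Nat.cast_add_one, rpow_natCast]
  ring

theorem gammaMeasure_Iic_toReal_eq_erlangCDF (n : ℕ) (hn : 0 < n) {r : ℝ} (hr : 0 < r) {x : ℝ}
    (hx : 0 ≤ x) : (gammaMeasure n r (Iic x)).toReal = erlangCDF n (r * x) := by
  obtain ⟨m, rfl⟩ := Nat.exists_eq_add_one_of_ne_zero hn.ne'
  have hderiv (t : ℝ) : HasDerivAt (fun t => erlangCDF (m + 1) (r * t))
      (r * (exp (-(r * t)) * ((r * t) ^ m / m !))) t := by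
    have h := (hasDerivAt_erlangCDF m (r * t)).comp t ((hasDerivAt_id t).const_mul r)
    rw [mul_one] at h
    exact h.congr_deriv (mul_comm _ _)
  push_cast
  rw [gammaMeasure_Iic_toReal_eq_intervalIntegral (by positivity) hr hx,
    intervalIntegral.integral_congr (fun t ht => gammaPDFReal_natCast_add_one m r
      (by rw [uIcc_of_le hx] at ht; exact ht.1)),
    intervalIntegral.integral_eq_sub_of_hasDerivAt (fun t _ => hderiv t)
      ((by fun_prop : Continuous _).intervalIntegrable 0 x),
    mul_zero, erlangCDF_zero_right _ m.succ_ne_zero, sub_zero]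

/-- **Alzer-type upper bound on the normalized incomplete gamma function.**
For every positive integer `N` and every `x > 0`, the CDF `F_N` of the
normalized Gamma distribution (shape `N`, rate `N`) satisfies
`F_N(x) ≤ (1 − e^{−N x})^N`. -/
theorem normalized_gamma_cdf_upper_bound
    (N : ℕ) (hN : 0 < N) (x : ℝ) (hx : 0 < x) :
    ((gammaMeasure (N : ℝ) (N : ℝ)) (Set.Iic x)).toReal
      ≤ (1 - Real.exp (-(N : ℝ) * x)) ^ N := by
  rw [gammaMeasure_Iic_toReal_eq_erlangCDF N hN (Nat.cast_pos.2 hN) hx.le, neg_mul]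
  exact erlangCDF_le_one_sub_exp_neg_pow N (by positivity)
end
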